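/- arXiv:2112.03840 — 3 statements merged into one kernel-verified Lean document; each statement's English description precedes it below -/
import Mathlib

section
/- Let G act transitively on (M, μ) by dilations with character λ, and let K ∈ L(M×M, μ⊗μ) be the kernel of the integral operator Kf(x) = ∫ K(x,y) f(y) dμ(y) with domain D ⊆ L(M,μ). Suppose D is L_g-invariant and satisfies the separation property: there is a sequence (f_k) ⊆ D such that any F ∈ L(M,μ) with ∫ F f_k dμ = 0 for all k is zero a.e. Then the operator K is homogeneous (commutes with all L_g on D) if and only if for every g ∈ G, K(gx, gy) = λ_g⁻¹ K(x,y) for μ⊗μ-almost every (x,y). -/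
open MeasureTheory
open scoped ENNReal NNReal

/-!
Write `λ = lam g`. Changing variables `y ↦ g • y` turns `∫ K(x,y) f(g⁻¹y) dμ(y)` into
`λ ∫ K(x,gy) f(y) dμ(y)`, so homogeneity says that the kernels `K(g⁻¹x, ·)` and
`λ K(x, g ·)` have the same integral against every `f ∈ D`. By the separation property
this holds iff they agree a.e., for a.e. `x`; measurability of `K` upgrades this to an
a.e. identity on `M × M`, which becomes weak homogeneity after substituting `g • x` for `x`.
-/

namespace MeasureTheory

section MapEqSMul

variable {α β : Type*} [MeasurableSpace α] [MeasurableSpace β] {μ : Measure α} {ν : Measure β}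
  {f : α → β}

theorem Measure.quasiMeasurePreserving_of_map_eq_smul (hf : Measurable f) {c : ℝ≥0∞}
    (h : μ.map f = c • ν) : Measure.QuasiMeasurePreserving f μ ν :=
  ⟨hf, h ▸ Measure.smul_absolutelyContinuous⟩

theorem Integrable.comp_of_map_eq_smul (hf : Measurable f) {c : ℝ≥0}
    (h : μ.map f = (c : ℝ≥0∞) • ν) {φ : β → ℝ} (hφ : Integrable φ ν) :
    Integrable (fun x => φ (f x)) μ := by
  have hφ' : Integrable φ (μ.map f) := h ▸ hφ.smul_measure ENNReal.coe_ne_top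
  exact (integrable_map_measure hφ'.1 hf.aemeasurable).1 hφ'

theorem integral_comp_of_map_eq_smul (hf : Measurable f) {c : ℝ≥0}
    (h : μ.map f = (c : ℝ≥0∞) • ν) {φ : β → ℝ} (hφ : AEStronglyMeasurable φ ν) :
    ∫ x, φ (f x) ∂μ = c * ∫ y, φ y ∂ν := by
  have hφ' : AEStronglyMeasurable φ (μ.map f) := h ▸ hφ.smul_measure _
  rw [← integral_map hf.aemeasurable hφ', h, integral_smul_measure, ENNReal.coe_toReal,
    smul_eq_mul]

end MapEqSMul

end MeasureTheory

theorem ae_eq_of_forall_integral_mul_eq {α : Type*} [MeasurableSpace α] {μ : Measure α}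
    {fk : ℕ → α → ℝ} (hsep : ∀ F : α → ℝ, (∀ k, ∫ x, F x * fk k x ∂μ = 0) → F =ᵐ[μ] 0)
    {F₁ F₂ : α → ℝ} (h₁ : ∀ k, Integrable (fun x => F₁ x * fk k x) μ)
    (h₂ : ∀ k, Integrable (fun x => F₂ x * fk k x) μ)
    (heq : ∀ k, ∫ x, F₁ x * fk k x ∂μ = ∫ x, F₂ x * fk k x ∂μ) :
    F₁ =ᵐ[μ] F₂ := by
  have hsub : F₁ - F₂ =ᵐ[μ] 0 := hsep _ fun k => by
    simp only [Pi.sub_apply, sub_mul]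
    rw [integral_sub (h₁ k) (h₂ k), heq k, sub_self]
  filter_upwards [hsub] with x hx
  exact sub_eq_zero.1 hx

section Dilation

variable {M G : Type*} [MeasurableSpace M] [Group G] [MulAction G M] {μ : Measure M}
  {lam : G → ℝ≥0}

theorem map_smul_eq_smul_measure
    (hdil : ∀ g : G, μ.map (fun x : M => g⁻¹ • x) = (lam g : ℝ≥0∞) • μ) (g : G) :
    μ.map (fun x : M => g • x) = (lam g⁻¹ : ℝ≥0∞) • μ := by
  simpa using hdil g⁻¹

theorem quasiMeasurePreserving_smul (hmeas : ∀ g : G, Measurable fun x : M => g • x)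
    (hdil : ∀ g : G, μ.map (fun x : M => g⁻¹ • x) = (lam g : ℝ≥0∞) • μ) (g : G) :
    Measure.QuasiMeasurePreserving (fun x : M => g • x) μ μ :=
  Measure.quasiMeasurePreserving_of_map_eq_smul (hmeas g) (map_smul_eq_smul_measure hdil g)

theorem integrable_comp_smul (hmeas : ∀ g : G, Measurable fun x : M => g • x)
    (hdil : ∀ g : G, μ.map (fun x : M => g⁻¹ • x) = (lam g : ℝ≥0∞) • μ) (g : G)
    {φ : M → ℝ} (hφ : Integrable φ μ) : Integrable (fun y => φ (g • y)) μ :=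
  hφ.comp_of_map_eq_smul (hmeas g) (map_smul_eq_smul_measure hdil g)

theorem integral_eq_mul_integral_comp_smul (hmeas : ∀ g : G, Measurable fun x : M => g • x)
    (hdil : ∀ g : G, μ.map (fun x : M => g⁻¹ • x) = (lam g : ℝ≥0∞) • μ) (g : G)
    {φ : M → ℝ} (hφ : Integrable φ μ) :
    ∫ y, φ y ∂μ = lam g * ∫ y, φ (g • y) ∂μ := by
  simpa using integral_comp_of_map_eq_smul (hmeas g⁻¹) (hdil g)
    (integrable_comp_smul hmeas hdil g hφ).1

theorem integral_mul_comp_inv_smul (hmeas : ∀ g : G, Measurable fun x : M => g • x)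
    (hdil : ∀ g : G, μ.map (fun x : M => g⁻¹ • x) = (lam g : ℝ≥0∞) • μ) (g : G)
    {k f : M → ℝ} (hkf : Integrable (fun y => k y * f (g⁻¹ • y)) μ) :
    ∫ y, k y * f (g⁻¹ • y) ∂μ = lam g * ∫ y, k (g • y) * f y ∂μ := by
  simpa using integral_eq_mul_integral_comp_smul hmeas hdil g hkf

theorem integrable_comp_smul_mul (hmeas : ∀ g : G, Measurable fun x : M => g • x)
    (hdil : ∀ g : G, μ.map (fun x : M => g⁻¹ • x) = (lam g : ℝ≥0∞) • μ) (g : G)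
    {k f : M → ℝ} (hkf : Integrable (fun y => k y * f (g⁻¹ • y)) μ) :
    Integrable (fun y => k (g • y) * f y) μ := by
  simpa using integrable_comp_smul hmeas hdil g hkf

theorem ae_eq_mul_comp_smul_of_integral_mul_eq (hmeas : ∀ g : G, Measurable fun x : M => g • x)
    (hdil : ∀ g : G, μ.map (fun x : M => g⁻¹ • x) = (lam g : ℝ≥0∞) • μ) {fk : ℕ → M → ℝ}
    (hsep : ∀ F : M → ℝ, (∀ k, ∫ x, F x * fk k x ∂μ = 0) → F =ᵐ[μ] 0) (g : G) {k₁ k₂ : M → ℝ}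
    (h₁ : ∀ k, Integrable (fun y => k₁ y * fk k y) μ)
    (h₂ : ∀ k, Integrable (fun y => k₂ y * fk k (g⁻¹ • y)) μ)
    (heq : ∀ k, ∫ y, k₁ y * fk k y ∂μ = ∫ y, k₂ y * fk k (g⁻¹ • y) ∂μ) :
    k₁ =ᵐ[μ] fun y => lam g * k₂ (g • y) := by
  refine ae_eq_of_forall_integral_mul_eq hsep h₁ (fun k => ?_) (fun k => ?_)
  · simpa only [mul_assoc] using
      (integrable_comp_smul_mul hmeas hdil g (h₂ k)).const_mul (lam g : ℝ)
  · rw [heq k, integral_mul_comp_inv_smul hmeas hdil g (h₂ k), ← integral_const_mul]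
    simp only [mul_assoc]

theorem integral_mul_eq_integral_mul_comp_inv_smul
    (hmeas : ∀ g : G, Measurable fun x : M => g • x)
    (hdil : ∀ g : G, μ.map (fun x : M => g⁻¹ • x) = (lam g : ℝ≥0∞) • μ) (g : G)
    {k₁ k₂ f : M → ℝ} (hk : k₁ =ᵐ[μ] fun y => lam g * k₂ (g • y))
    (h₂ : Integrable (fun y => k₂ y * f (g⁻¹ • y)) μ) :
    ∫ y, k₁ y * f y ∂μ = ∫ y, k₂ y * f (g⁻¹ • y) ∂μ := by
  rw [integral_mul_comp_inv_smul hmeas hdil g h₂, ← integral_const_mul]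
  refine integral_congr_ae ?_
  filter_upwards [hk] with y hy
  rw [hy, mul_assoc]

variable [SigmaFinite μ]

theorem ae_prod_kernel_inv_smul_iff (hmeas : ∀ g : G, Measurable fun x : M => g • x)
    (hdil : ∀ g : G, μ.map (fun x : M => g⁻¹ • x) = (lam g : ℝ≥0∞) • μ) {g : G}
    (hlam : (lam g : ℝ) ≠ 0) (K : M → M → ℝ) :
    (∀ᵐ q ∂(μ.prod μ), K (g⁻¹ • q.1) q.2 = lam g * K q.1 (g • q.2)) ↔
      ∀ᵐ q ∂(μ.prod μ), K (g • q.1) (g • q.2) = (lam g : ℝ)⁻¹ * K q.1 q.2 := by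
  have hprod : ∀ h : G, Measure.QuasiMeasurePreserving (Prod.map (fun x : M => h • x) id)
      (μ.prod μ) (μ.prod μ) := fun h =>
    QuasiMeasurePreserving.prodMap (quasiMeasurePreserving_smul hmeas hdil h)
      (Measure.QuasiMeasurePreserving.id μ)
  constructor
  · intro hK
    filter_upwards [(hprod g).ae hK] with q hq
    simp only [Prod.map_fst, Prod.map_snd, id, inv_smul_smul] at hq
    rw [hq, inv_mul_cancel_left₀ hlam]
  · intro hK
    filter_upwards [(hprod g⁻¹).ae hK] with q hq
    simp only [Prod.map_fst, Prod.map_snd, id, smul_inv_smul] at hq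
    rw [hq, mul_inv_cancel_left₀ hlam]

theorem ae_prod_kernel_inv_smul_eq_of_integral_eq
    (hmeas : ∀ g : G, Measurable fun x : M => g • x)
    (hdil : ∀ g : G, μ.map (fun x : M => g⁻¹ • x) = (lam g : ℝ≥0∞) • μ) {K : M → M → ℝ}
    (hK : Measurable fun q : M × M => K q.1 q.2) {fk : ℕ → M → ℝ}
    (hsep : ∀ F : M → ℝ, (∀ k, ∫ x, F x * fk k x ∂μ = 0) → F =ᵐ[μ] 0) (g : G)
    (hint : ∀ k, ∀ᵐ x ∂μ, Integrable (fun y => K x y * fk k y) μ)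
    (hint' : ∀ k, ∀ᵐ x ∂μ, Integrable (fun y => K x y * fk k (g⁻¹ • y)) μ)
    (hop : ∀ k, (fun x => ∫ y, K (g⁻¹ • x) y * fk k y ∂μ)
      =ᵐ[μ] fun x => ∫ y, K x y * fk k (g⁻¹ • y) ∂μ) :
    ∀ᵐ q ∂(μ.prod μ), K (g⁻¹ • q.1) q.2 = lam g * K q.1 (g • q.2) := by
  have hset : MeasurableSet {q : M × M | K (g⁻¹ • q.1) q.2 = lam g * K q.1 (g • q.2)} :=
    measurableSet_eq_fun (hK.comp (((hmeas g⁻¹).comp measurable_fst).prodMk measurable_snd))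
      (measurable_const.mul (hK.comp (measurable_fst.prodMk ((hmeas g).comp measurable_snd))))
  have hrow : ∀ k, ∀ᵐ x ∂μ, Integrable (fun y => K (g⁻¹ • x) y * fk k y) μ := fun k =>
    (quasiMeasurePreserving_smul hmeas hdil g⁻¹).ae (hint k)
  rw [Measure.ae_prod_iff_ae_ae hset]
  filter_upwards [ae_all_iff.2 hrow, ae_all_iff.2 hint', ae_all_iff.2 hop] with x h₁ h₂ heq
  exact ae_eq_mul_comp_smul_of_integral_mul_eq hmeas hdil hsep g h₁ h₂ heq

end Dilation

theorem homogeneous_integral_operator_iff_weakly_homogeneous_kernel_general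
    {M : Type*} [MeasurableSpace M] {G : Type*} [Group G] [MulAction G M]
    (μ : Measure M) [SigmaFinite μ]
    (hmeas : ∀ g : G, Measurable fun x : M => g • x)
    (lam : G → ℝ≥0) (hlam : ∀ g, 0 < lam g)
    (hdil : ∀ g : G, μ.map (fun x : M => g⁻¹ • x) = (lam g : ℝ≥0∞) • μ)
    (K : M → M → ℝ) (hK : Measurable fun q : M × M => K q.1 q.2)
    (D : Set (M → ℝ))
    (hD : ∀ (g : G), ∀ f ∈ D, (fun x => f (g⁻¹ • x)) ∈ D)
    (hdef : ∀ f ∈ D, ∀ᵐ x ∂μ, Integrable (fun y => K x y * f y) μ)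
    (fk : ℕ → M → ℝ) (hfk : ∀ k, fk k ∈ D)
    (hsep : ∀ F : M → ℝ, (∀ k, ∫ x, F x * fk k x ∂μ = 0) → F =ᵐ[μ] 0) :
    (∀ (g : G), ∀ f ∈ D,
        (fun x => ∫ y, K (g⁻¹ • x) y * f y ∂μ)
          =ᵐ[μ] fun x => ∫ y, K x y * f (g⁻¹ • y) ∂μ)
      ↔ ∀ g : G, ∀ᵐ q ∂(μ.prod μ),
          K (g • q.1) (g • q.2) = ((lam g : ℝ))⁻¹ * K q.1 q.2 := by
  have hlam' : ∀ g, (lam g : ℝ) ≠ 0 := fun g => NNReal.coe_ne_zero.2 (hlam g).ne'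
  refine ⟨fun hop g => ?_, fun hker g f hf => ?_⟩
  · rw [← ae_prod_kernel_inv_smul_iff hmeas hdil (hlam' g)]
    exact ae_prod_kernel_inv_smul_eq_of_integral_eq hmeas hdil hK hsep g
      (fun k => hdef _ (hfk k)) (fun k => hdef _ (hD g _ (hfk k))) (fun k => hop g _ (hfk k))
  · have hrows := Measure.ae_ae_of_ae_prod
      ((ae_prod_kernel_inv_smul_iff hmeas hdil (hlam' g) K).2 (hker g))
    filter_upwards [hrows, hdef _ (hD g f hf)] with x hx hint
    exact integral_mul_eq_integral_mul_comp_inv_smul hmeas hdil g hx hint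

/-- Characterization of homogeneous integral operators: with a transitive group of
dilations (`μ(g·A) = λ_g μ(A)`, encoded as `μ.map (g⁻¹ • ·) = λ_g • μ`), an
integral operator `Kf(x) = ∫ K(x,y) f(y) dμ(y)` on an `L_g`-invariant domain `D`
satisfying the separation property commutes with all translations `L_g`
(i.e. is homogeneous) if and only if its kernel is weakly homogeneous:
for every `g ∈ G`, `K(gx, gy) = λ_g⁻¹ K(x,y)` for `μ⊗μ`-a.e. `(x,y)`. -/
theorem homogeneous_integral_operator_iff_weakly_homogeneous_kernel
    {M : Type*} [MeasurableSpace M] {G : Type*} [Group G] [MulAction G M]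
    (μ : Measure M) [SigmaFinite μ]
    (hmeas : ∀ g : G, Measurable fun x : M => g • x)
    (htrans : ∀ x y : M, ∃ g : G, g • x = y)
    (lam : G → ℝ≥0) (hlam : ∀ g, 0 < lam g)
    (hdil : ∀ g : G, μ.map (fun x : M => g⁻¹ • x) = (lam g : ℝ≥0∞) • μ)
    (K : M → M → ℝ) (hK : Measurable fun q : M × M => K q.1 q.2)
    (D : Set (M → ℝ))
    (hD : ∀ (g : G), ∀ f ∈ D, (fun x => f (g⁻¹ • x)) ∈ D)
    (hdef : ∀ f ∈ D, ∀ᵐ x ∂μ, Integrable (fun y => K x y * f y) μ)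
    (fk : ℕ → M → ℝ) (hfk : ∀ k, fk k ∈ D)
    (hsep : ∀ F : M → ℝ, (∀ k, ∫ x, F x * fk k x ∂μ = 0) → F =ᵐ[μ] 0) :
    (∀ (g : G), ∀ f ∈ D,
        (fun x => ∫ y, K (g⁻¹ • x) y * f y ∂μ)
          =ᵐ[μ] fun x => ∫ y, K x y * f (g⁻¹ • y) ∂μ)
      ↔ ∀ g : G, ∀ᵐ q ∂(μ.prod μ),
          K (g • q.1) (g • q.2) = ((lam g : ℝ))⁻¹ * K q.1 q.2 :=
  homogeneous_integral_operator_iff_weakly_homogeneous_kernel_general μ hmeas lam hlam hdil K hK D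
    hD hdef fk hfk hsep
end

section
/- Let X be a locally compact, Hausdorff, second countable topological space and μ a Radon measure on X. Then there exists a sequence (f_k) of compactly supported continuous real-valued functions on X such that for any measurable F : X → ℂ: if F·f_k is integrable with ∫ F f_k dμ = 0 for all k, then F = 0 μ-almost everywhere. -/
/-!
A countable basis gives countably many pairs `V ⊆ closure V ⊆ W` of finite unions of basic open
sets, and Urysohn functions `f_k` for these pairs can be chosen equal to `1` on any prescribed
compact `K` and supported in any prescribed open `U ⊇ K`. Taking `U = univ` shows that `F` is
locally integrable. Since compact sets are `Gδ` (the space is metrizable), `K` is the intersection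
of a shrinking sequence of open sets, and the corresponding `f_k` converge pointwise to the
indicator of `K`; dominated convergence then gives `∫_K F dμ = 0` for every compact `K`, which
forces `F = 0` almost everywhere.
-/

open MeasureTheory Set Function Filter Topology

section Topology

variable {X : Type*} [TopologicalSpace X]

theorem TopologicalSpace.IsTopologicalBasis.exists_finite_sUnion_between [LocallyCompactSpace X]
    [RegularSpace X] {B : Set (Set X)} (hB : IsTopologicalBasis B) {K U : Set X}
    (hK : IsCompact K) (hU : IsOpen U) (hKU : K ⊆ U) :
    ∃ t ⊆ B, t.Finite ∧ K ⊆ ⋃₀ t ∧ closure (⋃₀ t) ⊆ U ∧ IsCompact (closure (⋃₀ t)) := by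
  obtain ⟨V, hV, hKV, hVU, hVc⟩ := exists_open_between_and_isCompact_closure hK hU hKU
  have hKcover : K ⊆ ⋃ w ∈ {w ∈ B | w ⊆ V}, id w := by
    rw [hB.open_eq_sUnion' hV, sUnion_eq_biUnion] at hKV
    exact hKV
  obtain ⟨t, htB, htf, hKt⟩ :=
    hK.elim_finite_subcover_image (fun w hw => hB.isOpen hw.1) hKcover
  have htV : closure (⋃₀ t) ⊆ closure V := closure_mono (sUnion_subset fun w hw => (htB hw).2)
  exact ⟨t, fun w hw => (htB hw).1, htf, by rwa [sUnion_eq_biUnion], htV.trans hVU,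
    hVc.of_isClosed_subset isClosed_closure htV⟩

variable (X) in
theorem exists_countable_isOpen_between [LocallyCompactSpace X] [RegularSpace X]
    [SecondCountableTopology X] :
    ∃ S : Set (Set X), S.Countable ∧ (∀ V ∈ S, IsOpen V) ∧
      ∀ K U : Set X, IsCompact K → IsOpen U → K ⊆ U →
        ∃ V ∈ S, K ⊆ V ∧ closure V ⊆ U ∧ IsCompact (closure V) := by
  obtain ⟨B, hBc, -, hB⟩ := TopologicalSpace.exists_countable_basis X
  refine ⟨sUnion '' {t | t.Finite ∧ t ⊆ B}, (countable_ofPred_finite_subset hBc).image _, ?_, ?_⟩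
  · rintro _ ⟨t, ⟨-, htB⟩, rfl⟩
    exact isOpen_sUnion fun w hw => hB.isOpen (htB hw)
  · intro K U hK hU hKU
    obtain ⟨t, htB, htf, hKt, htU, htc⟩ := hB.exists_finite_sUnion_between hK hU hKU
    exact ⟨⋃₀ t, mem_image_of_mem _ ⟨htf, htB⟩, hKt, htU, htc⟩

theorem exists_urysohn_seq [LocallyCompactSpace X] [T2Space X] [SecondCountableTopology X] :
    ∃ f : ℕ → X → ℝ, (∀ k, Continuous (f k) ∧ HasCompactSupport (f k) ∧ ∀ x, f k x ∈ Icc 0 1) ∧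
      ∀ K U : Set X, IsCompact K → IsOpen U → K ⊆ U →
        ∃ k, EqOn (f k) 1 K ∧ support (f k) ⊆ U := by
  obtain ⟨S, hSc, hSo, hS⟩ := exists_countable_isOpen_between X
  set P := {p ∈ S ×ˢ S | closure p.1 ⊆ p.2 ∧ IsCompact (closure p.2)}
  have hurysohn : ∀ p ∈ P, ∃ g : X → ℝ, (Continuous g ∧ HasCompactSupport g ∧ ∀ x, g x ∈ Icc 0 1)
      ∧ EqOn g 1 p.1 ∧ support g ⊆ p.2 := by
    rintro ⟨V, W⟩ ⟨⟨-, hW⟩, hVW, hWc⟩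
    obtain ⟨g, hgW, hg1, hg01⟩ :=
      exists_tsupport_one_of_isOpen_isClosed (hSo W hW) hWc isClosed_closure hVW
    exact ⟨g, ⟨g.continuous, hWc.of_isClosed_subset (isClosed_tsupport g)
      (hgW.trans subset_closure), hg01⟩, hg1.mono subset_closure, subset_tsupport g |>.trans hgW⟩
  choose! g hg hg1 hgsupp using hurysohn
  -- `K ⊆ V ⊆ closure V ⊆ W ⊆ U` with `V, W ∈ S`: one Urysohn function per pair serves all `K ⊆ U`
  have hsep : ∀ K U : Set X, IsCompact K → IsOpen U → K ⊆ U →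
      ∃ p ∈ P, EqOn (g p) 1 K ∧ support (g p) ⊆ U := by
    intro K U hK hU hKU
    obtain ⟨W, hW, hKW, hWU, hWc⟩ := hS K U hK hU hKU
    obtain ⟨V, hV, hKV, hVW, -⟩ := hS K W hK (hSo W hW) hKW
    have hP : (V, W) ∈ P := ⟨⟨hV, hW⟩, hVW, hWc⟩
    exact ⟨(V, W), hP, (hg1 _ hP).mono hKV, (hgsupp _ hP).trans (subset_closure.trans hWU)⟩
  obtain ⟨p₀, hp₀, -⟩ := hsep ∅ ∅ isCompact_empty isOpen_empty subset_rfl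
  obtain ⟨e, he⟩ := ((hSc.prod hSc).mono fun p hp => hp.1).exists_eq_range ⟨p₀, hp₀⟩
  refine ⟨g ∘ e, fun k => hg _ (he ▸ mem_range_self k), fun K U hK hU hKU => ?_⟩
  obtain ⟨p, hp, hpK, hpU⟩ := hsep K U hK hU hKU
  obtain ⟨k, rfl⟩ := he ▸ hp
  exact ⟨k, hpK, hpU⟩

theorem IsCompact.exists_seq_isOpen_tendsto [WeaklyLocallyCompactSpace X] {K : Set X}
    (hK : IsCompact K) (hKδ : IsGδ K) :
    ∃ L, IsCompact L ∧ ∃ U : ℕ → Set X, (∀ j, IsOpen (U j) ∧ K ⊆ U j ∧ U j ⊆ L) ∧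
      ∀ x ∉ K, ∀ᶠ j in atTop, x ∉ U j := by
  obtain ⟨L, hL, hKL⟩ := exists_compact_superset hK
  obtain ⟨V, hVo, rfl⟩ := hKδ.eq_iInter_nat
  refine ⟨L, hL, fun j => interior L ∩ ⋂ i ∈ Iic j, V i, fun j => ⟨?_, ?_, ?_⟩, ?_⟩
  · exact isOpen_interior.inter ((finite_Iic j).isOpen_biInter fun i _ => hVo i)
  · exact subset_inter hKL (subset_iInter₂ fun i _ => iInter_subset V i)
  · exact inter_subset_left.trans interior_subset
  · intro x hx
    obtain ⟨i, hi⟩ : ∃ i, x ∉ V i := by simpa using hx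
    filter_upwards [eventually_ge_atTop i] with j hij hxj
    exact hi (mem_iInter₂.1 hxj.2 i hij)

theorem exists_seq_tendsto_indicator {f : ℕ → X → ℝ}
    (hf : ∀ K U : Set X, IsCompact K → IsOpen U → K ⊆ U → ∃ k, EqOn (f k) 1 K ∧ support (f k) ⊆ U)
    [WeaklyLocallyCompactSpace X] {K : Set X} (hK : IsCompact K) (hKδ : IsGδ K) :
    ∃ L, IsCompact L ∧ ∃ k : ℕ → ℕ, (∀ j, support (f (k j)) ⊆ L) ∧
      ∀ x, Tendsto (fun j => f (k j) x) atTop (𝓝 (K.indicator 1 x)) := by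
  obtain ⟨L, hL, U, hU, hUK⟩ := hK.exists_seq_isOpen_tendsto hKδ
  choose k hk1 hkU using fun j => hf K (U j) hK (hU j).1 (hU j).2.1
  refine ⟨L, hL, k, fun j => (hkU j).trans (hU j).2.2, fun x => ?_⟩
  by_cases hx : x ∈ K
  · simp [hx, hk1 _ hx]
  · rw [indicator_of_notMem hx]
    refine tendsto_const_nhds.congr' ((hUK x hx).mono fun j hj => ?_)
    exact (notMem_support.1 fun h => hj (hkU j h)).symm

end Topology

theorem tendsto_integral_mul_of_tendsto_indicator {𝕜 X : Type*} [RCLike 𝕜] [MeasurableSpace X]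
    {μ : Measure X} {F : X → 𝕜} {g : ℕ → X → ℝ} {s L : Set X} (hs : MeasurableSet s)
    (hL : MeasurableSet L) (hFm : AEStronglyMeasurable F μ) (hF : IntegrableOn F L μ)
    (hgm : ∀ j, AEStronglyMeasurable (g j) μ) (hg_le : ∀ j x, |g j x| ≤ 1)
    (hg_supp : ∀ j, support (g j) ⊆ L)
    (hg : ∀ᵐ x ∂μ, Tendsto (fun j => g j x) atTop (𝓝 (s.indicator 1 x))) :
    Tendsto (fun j => ∫ x, F x * g j x ∂μ) atTop (𝓝 (∫ x in s, F x ∂μ)) := by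
  rw [← integral_indicator hs]
  refine tendsto_integral_of_dominated_convergence (L.indicator fun x => ‖F x‖)
    (fun j => hFm.mul (RCLike.continuous_ofReal.comp_aestronglyMeasurable (hgm j)))
    ((integrable_indicator_iff hL).2 hF.norm) (fun j => ae_of_all _ fun x => ?_) ?_
  · by_cases hx : g j x = 0
    · simpa [hx] using indicator_nonneg (fun _ _ => norm_nonneg _) _
    · rw [indicator_of_mem (hg_supp j hx), norm_mul, RCLike.norm_ofReal]
      exact mul_le_of_le_one_right (norm_nonneg _) (hg_le j x)
  · filter_upwards [hg] with x hx
    have hFx : s.indicator F x = F x * (s.indicator 1 x : ℝ) := by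
      by_cases hxs : x ∈ s <;> simp [hxs]
    rw [hFx]
    exact tendsto_const_nhds.mul (RCLike.continuous_ofReal.tendsto _ |>.comp hx)

theorem exists_separating_sequence_general
    {X : Type*} [TopologicalSpace X] [LocallyCompactSpace X] [T2Space X]
    [SecondCountableTopology X] [MeasurableSpace X] [BorelSpace X]
    (μ : Measure X) :
    ∃ f : ℕ → X → ℝ,
      (∀ k, Continuous (f k) ∧ HasCompactSupport (f k)) ∧
      ∀ F : X → ℂ, Measurable F →
        (∀ k, Integrable (fun x => F x * (f k x : ℂ)) μ ∧
          ∫ x, F x * (f k x : ℂ) ∂μ = 0) →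
        F =ᵐ[μ] 0 := by
  obtain ⟨f, hf, hf_sep⟩ := exists_urysohn_seq (X := X)
  refine ⟨f, fun k => ⟨(hf k).1, (hf k).2.1⟩, fun F hFm hF => ?_⟩
  have hF_loc : LocallyIntegrable F μ := locallyIntegrable_iff.2 fun K hK => by
    obtain ⟨k, hk1, -⟩ := hf_sep K univ hK isOpen_univ (subset_univ K)
    exact (hF k).1.integrableOn.congr_fun (fun x hx => by simp [hk1 hx]) hK.measurableSet
  refine ae_eq_zero_of_forall_setIntegral_isCompact_eq_zero' hF_loc fun K hK => ?_
  obtain ⟨L, hL, k, hkL, hk⟩ := exists_seq_tendsto_indicator hf_sep hK hK.isClosed.isGδ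
  have hf_abs : ∀ k x, |f k x| ≤ 1 :=
    fun k x => abs_le.2 ⟨by linarith [((hf k).2.2 x).1], ((hf k).2.2 x).2⟩
  refine tendsto_nhds_unique (tendsto_integral_mul_of_tendsto_indicator (μ := μ) (F := F)
    hK.measurableSet hL.measurableSet hFm.aestronglyMeasurable (hF_loc.integrableOn_isCompact hL)
    (fun j => (hf (k j)).1.aestronglyMeasurable) (fun j => hf_abs (k j)) hkL (ae_of_all _ hk)) ?_
  exact tendsto_const_nhds.congr fun j => ((hF (k j)).2).symm

/-- Separation lemma: on a locally compact, Hausdorff, second countable space `X`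
with a Radon measure `μ`, there is a sequence of compactly supported continuous
real functions `f_k` such that any measurable `F : X → ℂ` with `F·f_k` integrable
and `∫ F f_k dμ = 0` for all `k` vanishes μ-a.e. -/
theorem exists_separating_sequence
    {X : Type*} [TopologicalSpace X] [LocallyCompactSpace X] [T2Space X]
    [SecondCountableTopology X] [MeasurableSpace X] [BorelSpace X]
    (μ : Measure X) [μ.Regular] :
    ∃ f : ℕ → X → ℝ,
      (∀ k, Continuous (f k) ∧ HasCompactSupport (f k)) ∧
      ∀ F : X → ℂ, Measurable F →
        (∀ k, Integrable (fun x => F x * (f k x : ℂ)) μ ∧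
          ∫ x, F x * (f k x : ℂ) ∂μ = 0) →
        F =ᵐ[μ] 0 :=
  exists_separating_sequence_general μ
end

section
/- Let X be locally compact, Hausdorff, second countable, μ a Radon measure, and F a measurable function on X. If there exists a dense (in the inductive limit sense) countable family (f_k) in C_c(X, ℝ) with F f_k ∈ L¹(X, μ) and ∫ F f_k dμ = 0 for all k, then F is locally integrable on X. -/
/-!
Around any point pick a compact neighbourhood `K` and a Urysohn function equal to `1` on `K`.
A member `f_k` of the family uniformly within `1/2` of it satisfies `f_k > 1/2` on `K`, so
`|F| ≤ 2 |F f_k|` on `K` and integrability of `F f_k` gives integrability of `F` on the interior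
of `K`.
-/

open MeasureTheory Filter

theorem MeasureTheory.IntegrableOn.of_mul_ofReal_of_le_abs {X 𝕜 : Type*} [MeasurableSpace X]
    [RCLike 𝕜] {μ : Measure X} {F : X → 𝕜} {g : X → ℝ} {s : Set X} {c : ℝ}
    (hs : MeasurableSet s) (hc : 0 < c) (hF : AEStronglyMeasurable F (μ.restrict s))
    (hFg : IntegrableOn (fun x => F x * (g x : 𝕜)) s μ) (hg : ∀ x ∈ s, c ≤ |g x|) :
    IntegrableOn F s μ := by
  refine (hFg.norm.const_mul c⁻¹).mono' hF ((ae_restrict_iff' hs).2 (.of_forall fun x hx => ?_))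
  rw [norm_mul, RCLike.norm_ofReal, le_inv_mul_iff₀ hc, mul_comm c]
  exact mul_le_mul_of_nonneg_left (hg x hx) (norm_nonneg (F x))

theorem exists_one_half_lt_on_isCompact_of_uniformApprox {X : Type*} [TopologicalSpace X]
    [LocallyCompactSpace X] [T2Space X] (fk : ℕ → X → ℝ)
    (hdense : ∀ f : X → ℝ, Continuous f → HasCompactSupport f →
      ∃ ψ : ℕ → ℕ, TendstoUniformly (fun n => fk (ψ n)) f atTop)
    {K : Set X} (hK : IsCompact K) : ∃ k, ∀ x ∈ K, 1 / 2 < fk k x := by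
  obtain ⟨f, hf_one, -, hf_supp, -⟩ :=
    exists_continuous_one_zero_of_isCompact hK isClosed_empty (Set.disjoint_empty K)
  obtain ⟨ψ, hψ⟩ := hdense f f.continuous hf_supp
  obtain ⟨n, hn⟩ := (Metric.tendstoUniformly_iff.1 hψ (1 / 2) one_half_pos).exists
  refine ⟨ψ n, fun x hx => ?_⟩
  have hclose := hn x
  rw [hf_one hx, Pi.one_apply, Real.dist_eq] at hclose
  linarith [(abs_lt.1 hclose).2]

theorem vanishing_integrals_implies_locally_integrable_general
    {X : Type*} [TopologicalSpace X] [LocallyCompactSpace X] [T2Space X]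
    [MeasurableSpace X] [BorelSpace X]
    (μ : Measure X)
    (F : X → ℂ) (hF : Measurable F)
    (fk : ℕ → X → ℝ)
    (hdense : ∀ f : X → ℝ, Continuous f → HasCompactSupport f →
      ∃ Kc : Set X, IsCompact Kc ∧ ∃ ψ : ℕ → ℕ,
        (∀ n, tsupport (fk (ψ n)) ⊆ Kc) ∧
        TendstoUniformly (fun n => fk (ψ n)) f Filter.atTop)
    (hint : ∀ k, Integrable (fun x => F x * (fk k x : ℂ)) μ ∧
      ∫ x, F x * (fk k x : ℂ) ∂μ = 0) :
    ∀ x : X, ∃ U : Set X, IsOpen U ∧ x ∈ U ∧ IntegrableOn F U μ := by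
  intro x
  obtain ⟨K, hK, hKx⟩ := exists_compact_mem_nhds x
  obtain ⟨k, hk⟩ := exists_one_half_lt_on_isCompact_of_uniformApprox fk
    (fun f hf hfs => let ⟨_, _, ψ, _, hψ⟩ := hdense f hf hfs; ⟨ψ, hψ⟩) hK
  refine ⟨interior K, isOpen_interior, mem_interior_iff_mem_nhds.2 hKx, ?_⟩
  exact (hint k).1.integrableOn.of_mul_ofReal_of_le_abs isOpen_interior.measurableSet
    one_half_pos hF.aestronglyMeasurable.restrict
    fun y hy => (hk y (interior_subset hy)).le.trans (le_abs_self _)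

/-- If `X` is locally compact, Hausdorff, second countable, `μ` a Radon measure,
`F` measurable, and there is a countable family `(f_k)` in `C_c(X, ℝ)` which is
dense in the inductive-limit sense (every `f ∈ C_c(X,ℝ)` is a uniform limit of a
subsequence of `(f_k)` with supports in a common compact set), such that
`F f_k ∈ L¹(X, μ)` with `∫ F f_k dμ = 0` for all `k`, then `F` is locally
integrable: every point has an open neighbourhood on which `|F|` has finite
integral. -/
theorem vanishing_integrals_implies_locally_integrable
    {X : Type*} [TopologicalSpace X] [LocallyCompactSpace X] [T2Space X]
    [SecondCountableTopology X] [MeasurableSpace X] [BorelSpace X]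
    (μ : Measure X) [μ.Regular]
    (F : X → ℂ) (hF : Measurable F)
    (fk : ℕ → X → ℝ)
    (hfk : ∀ k, Continuous (fk k) ∧ HasCompactSupport (fk k))
    (hdense : ∀ f : X → ℝ, Continuous f → HasCompactSupport f →
      ∃ Kc : Set X, IsCompact Kc ∧ ∃ ψ : ℕ → ℕ,
        (∀ n, tsupport (fk (ψ n)) ⊆ Kc) ∧
        TendstoUniformly (fun n => fk (ψ n)) f Filter.atTop)
    (hint : ∀ k, Integrable (fun x => F x * (fk k x : ℂ)) μ ∧
      ∫ x, F x * (fk k x : ℂ) ∂μ = 0) :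
    ∀ x : X, ∃ U : Set X, IsOpen U ∧ x ∈ U ∧ IntegrableOn F U μ :=
  vanishing_integrals_implies_locally_integrable_general μ F hF fk hdense hint
end
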